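/- Work on a probability space (Ω, F, ℙ). Let η₀, η₁, η₂ be independent standard Gaussian real random variables. Fix real parameters μ > 0, λ > 0, σ_B > 0 and t > 0, and define X₀ = √μ · η₀, Y = X₀ + σ_B · η₁, X_t = e^{−t/2} · X₀ + √(λ(1 − e^{−t})) · η₂. Set p = λ/μ, q = μ/σ_B², and D_t = 1 + (e^t − 1) p (1 + q). Define the score random variable S = −(e^t p (1+q)/D_t) · X_t + (e^{t/2} p q / D_t) · Y. Then S is conditionally centered given Y: E[S | σ(Y)] = 0 almost surely. -/

import Mathlib

open MeasureTheory ProbabilityTheory Real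
open scoped NNReal ENNReal

lemma gauss_int_id : Integrable (fun x : ℝ => x) (gaussianReal 0 1) := by
  rw [gaussianReal_of_var_ne_zero 0 one_ne_zero]
  rw [integrable_withDensity_iff (measurable_gaussianPDF 0 1)
    (ae_of_all _ fun x => ENNReal.ofReal_lt_top)]
  have : (fun x : ℝ => x * (gaussianPDF 0 1 x).toReal)
      = fun x : ℝ => (Real.sqrt (2 * π))⁻¹ * (x * Real.exp (-(2⁻¹) * x ^ 2)) := by
    funext x
    rw [gaussianPDF, ENNReal.toReal_ofReal (gaussianPDFReal_nonneg _ _ _), gaussianPDFReal]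
    push_cast
    ring_nf
  rw [this]
  exact (integrable_mul_exp_neg_mul_sq (by norm_num : (0:ℝ) < 2⁻¹)).const_mul _

lemma gauss_mean_zero : ∫ x, x ∂(gaussianReal 0 1) = 0 := by
  have h := gaussianReal_map_const_mul (μ := 0) (v := 1) (-1)
  have h1 : (NNReal.mk ((-1:ℝ)^2) (sq_nonneg _)) * 1 = 1 := by
    ext; norm_num
  rw [mul_zero, h1] at h
  have h2 : ∫ x, x ∂(gaussianReal 0 1) = ∫ x, x ∂((gaussianReal 0 1).map ((-1 : ℝ) * ·)) := by
    rw [h]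
  have h3 : ∫ x, x ∂((gaussianReal 0 1).map ((-1 : ℝ) * ·))
      = ∫ x, (-1 : ℝ) * x ∂(gaussianReal 0 1) :=
    integral_map (by fun_prop) (by rw [h]; exact measurable_id.aestronglyMeasurable)
  rw [h3] at h2
  simp only [neg_one_mul] at h2
  have h4 : ∫ x : ℝ, -x ∂(gaussianReal 0 1) = - ∫ x : ℝ, x ∂(gaussianReal 0 1) :=
    integral_neg _
  rw [h4] at h2
  linarith [h2]


noncomputable def rotL (a b : ℝ) : (ℝ × ℝ) →ₗ[ℝ] ℝ × ℝ :=
  ((a • LinearMap.fst ℝ ℝ ℝ + b • LinearMap.snd ℝ ℝ ℝ).prod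
    ((-b) • LinearMap.fst ℝ ℝ ℝ + a • LinearMap.snd ℝ ℝ ℝ))

lemma rotL_apply (a b : ℝ) (z : ℝ × ℝ) :
    rotL a b z = (a * z.1 + b * z.2, -b * z.1 + a * z.2) := by
  simp [rotL, smul_eq_mul]

lemma rotL_det (a b : ℝ) (hab : a ^ 2 + b ^ 2 = 1) :
    LinearMap.det (rotL a b) = 1 := by
  rw [← LinearMap.det_toMatrix (Module.Basis.finTwoProd ℝ), Matrix.det_fin_two]
  simp only [LinearMap.toMatrix_apply, Module.Basis.finTwoProd_zero, Module.Basis.finTwoProd_one,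
    Module.Basis.coe_finTwoProd_repr, rotL_apply]
  simp only [Matrix.cons_val_zero, Matrix.cons_val_one, Matrix.head_cons]
  nlinarith [hab]

lemma rot_measurePreserving (a b : ℝ) (hab : a ^ 2 + b ^ 2 = 1) :
    MeasurePreserving (fun z : ℝ × ℝ => (a * z.1 + b * z.2, -b * z.1 + a * z.2))
      (volume : Measure (ℝ × ℝ)) volume := by
  have hmap : (volume : Measure (ℝ × ℝ)).map (rotL a b) = volume := by
    rw [Measure.map_linearMap_addHaar_eq_smul_addHaar _ (by rw [rotL_det a b hab]; norm_num)]
    simp [rotL_det a b hab]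
  have hfun : ⇑(rotL a b) = fun z : ℝ × ℝ => (a * z.1 + b * z.2, -b * z.1 + a * z.2) :=
    funext (rotL_apply a b)
  exact ⟨by rw [← hfun]; exact (rotL a b).continuous_of_finiteDimensional.measurable,
    by rw [← hfun, hmap]⟩

lemma gauss_prod_density :
    (gaussianReal 0 1).prod (gaussianReal 0 1)
      = (volume : Measure (ℝ × ℝ)).withDensity
          (fun z => gaussianPDF 0 1 z.1 * gaussianPDF 0 1 z.2) := by
  refine Measure.prod_eq fun s t hs ht => ?_
  rw [withDensity_apply _ (hs.prod ht), MeasureTheory.Measure.volume_eq_prod,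
    ← Measure.prod_restrict,
    lintegral_prod_mul (measurable_gaussianPDF 0 1).aemeasurable
      (measurable_gaussianPDF 0 1).aemeasurable,
    gaussianReal_of_var_ne_zero 0 one_ne_zero, withDensity_apply _ hs, withDensity_apply _ ht]

lemma gpdf_rot {a b : ℝ} (hab : a ^ 2 + b ^ 2 = 1) (z : ℝ × ℝ) :
    gaussianPDF 0 1 (a * z.1 + b * z.2) * gaussianPDF 0 1 (-b * z.1 + a * z.2)
      = gaussianPDF 0 1 z.1 * gaussianPDF 0 1 z.2 := by
  simp only [gaussianPDF, ← ENNReal.ofReal_mul (gaussianPDFReal_nonneg _ _ _)]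
  congr 1
  simp only [gaussianPDFReal]
  rw [mul_mul_mul_comm, ← Real.exp_add, mul_mul_mul_comm, ← Real.exp_add]
  congr 1
  congr 1
  push_cast
  linear_combination (-(z.1 ^ 2 + z.2 ^ 2) / 2) * hab

lemma gauss2_rot_inv {a b : ℝ} (hab : a ^ 2 + b ^ 2 = 1) :
    ((gaussianReal 0 1).prod (gaussianReal 0 1)).map
        (fun z : ℝ × ℝ => (a * z.1 + b * z.2, -b * z.1 + a * z.2))
      = (gaussianReal 0 1).prod (gaussianReal 0 1) := by
  set f : ℝ × ℝ → ℝ × ℝ := fun z => (a * z.1 + b * z.2, -b * z.1 + a * z.2) with hf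
  set g : ℝ × ℝ → ℝ≥0∞ := fun z => gaussianPDF 0 1 z.1 * gaussianPDF 0 1 z.2 with hg
  have hfm : Measurable f := (rot_measurePreserving a b hab).measurable
  have hgm : Measurable g :=
    ((measurable_gaussianPDF 0 1).comp measurable_fst).mul
      ((measurable_gaussianPDF 0 1).comp measurable_snd)
  ext s hs
  rw [Measure.map_apply hfm hs, gauss_prod_density, withDensity_apply _ (hfm hs),
    withDensity_apply _ hs, ← lintegral_indicator (hfm hs), ← lintegral_indicator hs]
  have key : ∀ z, (f ⁻¹' s).indicator g z = s.indicator g (f z) := by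
    intro z
    by_cases h : f z ∈ s
    · rw [Set.indicator_of_mem h, Set.indicator_of_mem (Set.mem_preimage.mpr h)]
      exact (gpdf_rot hab z).symm
    · rw [Set.indicator_of_notMem h,
        Set.indicator_of_notMem (fun hc => h (Set.mem_preimage.mp hc))]
  rw [lintegral_congr key]
  exact (rot_measurePreserving a b hab).lintegral_comp (hgm.indicator hs)

lemma rot_indepFun {Ω : Type*} [MeasurableSpace Ω] (P : Measure Ω) [IsProbabilityMeasure P]
    {η₀ η₁ : Ω → ℝ} (h0 : Measurable η₀) (h1 : Measurable η₁)
    (hind : IndepFun η₀ η₁ P) (hg0 : P.map η₀ = gaussianReal 0 1)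
    (hg1 : P.map η₁ = gaussianReal 0 1) {a b : ℝ} (hab : a ^ 2 + b ^ 2 = 1) :
    IndepFun (fun ω => a * η₀ ω + b * η₁ ω) (fun ω => -b * η₀ ω + a * η₁ ω) P := by
  set f : ℝ × ℝ → ℝ × ℝ := fun z => (a * z.1 + b * z.2, -b * z.1 + a * z.2) with hf
  have hfm : Measurable f := (rot_measurePreserving a b hab).measurable
  have hpairm : Measurable (fun ω => (η₀ ω, η₁ ω)) := h0.prodMk h1
  have hpair : P.map (fun ω => (η₀ ω, η₁ ω)) = (gaussianReal 0 1).prod (gaussianReal 0 1) := by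
    have h := (indepFun_iff_map_prod_eq_prod_map_map h0.aemeasurable h1.aemeasurable).mp hind
    rw [hg0, hg1] at h
    exact h
  set U : Ω → ℝ := fun ω => a * η₀ ω + b * η₁ ω with hU
  set V : Ω → ℝ := fun ω => -b * η₀ ω + a * η₁ ω with hV
  have hUm : Measurable U := (h0.const_mul a).add (h1.const_mul b)
  have hVm : Measurable V := (h0.const_mul (-b)).add (h1.const_mul a)
  have hUV : P.map (fun ω => (U ω, V ω)) = (gaussianReal 0 1).prod (gaussianReal 0 1) := by
    have hcomp : (fun ω => (U ω, V ω)) = f ∘ (fun ω => (η₀ ω, η₁ ω)) := rfl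
    rw [hcomp, ← Measure.map_map hfm hpairm, hpair, gauss2_rot_inv hab]
  have hPU : P.map U = gaussianReal 0 1 := by
    have : U = Prod.fst ∘ (fun ω => (U ω, V ω)) := rfl
    rw [this, ← Measure.map_map measurable_fst (hUm.prodMk hVm), hUV,
      Measure.map_fst_prod, measure_univ, one_smul]
  have hPV : P.map V = gaussianReal 0 1 := by
    have : V = Prod.snd ∘ (fun ω => (U ω, V ω)) := rfl
    rw [this, ← Measure.map_map measurable_snd (hUm.prodMk hVm), hUV,
      Measure.map_snd_prod, measure_univ, one_smul]
  exact (indepFun_iff_map_prod_eq_prod_map_map hUm.aemeasurable hVm.aemeasurable).mpr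
    (by rw [hUV, hPU, hPV])

/-- The single-mode conditional score is conditionally centered given `Y`
(Proposition 1): `E[S | σ(Y)] = 0` a.s. -/
theorem score_conditionally_centered {Ω : Type*} [MeasurableSpace Ω]
    (P : Measure Ω) [IsProbabilityMeasure P]
    (η₀ η₁ η₂ : Ω → ℝ)
    (hη₀ : Measurable η₀) (hη₁ : Measurable η₁) (hη₂ : Measurable η₂)
    (hind : iIndepFun ![η₀, η₁, η₂] P)
    (hg₀ : P.map η₀ = gaussianReal 0 1) (hg₁ : P.map η₁ = gaussianReal 0 1)
    (hg₂ : P.map η₂ = gaussianReal 0 1)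
    (μ lam σB t : ℝ) (hμ : 0 < μ) (hlam : 0 < lam) (hσB : 0 < σB) (ht : 0 < t)
    (X₀ Y Xt : Ω → ℝ)
    (hX₀ : X₀ = fun ω => Real.sqrt μ * η₀ ω)
    (hY : Y = fun ω => X₀ ω + σB * η₁ ω)
    (hXt : Xt = fun ω =>
      Real.exp (-t / 2) * X₀ ω + Real.sqrt (lam * (1 - Real.exp (-t))) * η₂ ω)
    (p q Dt : ℝ)
    (hp : p = lam / μ) (hq : q = μ / σB ^ 2)
    (hDt : Dt = 1 + (Real.exp t - 1) * p * (1 + q))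
    (S : Ω → ℝ)
    (hS : S = fun ω => -(Real.exp t * p * (1 + q) / Dt) * Xt ω
        + (Real.exp (t / 2) * p * q / Dt) * Y ω) :
    P[S | MeasurableSpace.comap Y inferInstance] =ᵐ[P] (fun _ => 0) := by
  -- basic positivity facts
  have hμ' : μ ≠ 0 := hμ.ne'
  have hσB' : σB ≠ 0 := hσB.ne'
  have hp0 : 0 < p := by rw [hp]; positivity
  have hq0 : 0 < q := by rw [hq]; positivity
  have hDt0 : 0 < Dt := by
    rw [hDt]
    have h1 : 1 < Real.exp t := by
      rw [← Real.exp_zero]; exact Real.exp_lt_exp.mpr ht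
    have h2 : 0 < (Real.exp t - 1) * p * (1 + q) :=
      mul_pos (mul_pos (by linarith) hp0) (by linarith)
    linarith
  have hDt' : Dt ≠ 0 := hDt0.ne'
  have hsqμ : (0:ℝ) < Real.sqrt μ := Real.sqrt_pos.mpr hμ
  have hsm : Real.sqrt μ * Real.sqrt μ = μ := Real.mul_self_sqrt hμ.le
  -- exponential identities
  have hE : Real.exp t = Real.exp (t / 2) * Real.exp (t / 2) := by
    rw [← Real.exp_add]; ring_nf
  have hEneg : Real.exp (-t / 2) = (Real.exp (t / 2))⁻¹ := by
    rw [neg_div, Real.exp_neg]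
  have hEpos : (0:ℝ) < Real.exp (t / 2) := Real.exp_pos _
  -- rotation setup
  set r : ℝ := Real.sqrt (μ + σB ^ 2) with hrdef
  have hr : 0 < r := Real.sqrt_pos.mpr (by positivity)
  have hr2 : r * r = μ + σB ^ 2 := Real.mul_self_sqrt (by positivity)
  set a : ℝ := Real.sqrt μ / r with hadef
  set b : ℝ := σB / r with hbdef
  have hab : a ^ 2 + b ^ 2 = 1 := by
    rw [hadef, hbdef, div_pow, div_pow]
    field_simp
    nlinarith [hsm, hr2]
  -- independence of η₀ and η₁, and of the pair with η₂
  have hind01 : IndepFun η₀ η₁ P := by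
    have h := hind.indepFun (i := 0) (j := 1) (by decide)
    simpa using h
  have hUV := rot_indepFun P hη₀ hη₁ hind01 hg₀ hg₁ hab
  -- the residual direction
  set V : Ω → ℝ := fun ω => -(σB * Real.sqrt μ) * η₀ ω + μ * η₁ ω with hVdef
  have hVm : Measurable V := (hη₀.const_mul _).add (hη₁.const_mul _)
  have hYm : Measurable Y := by
    rw [hY, hX₀]; exact (hη₀.const_mul _).add (hη₁.const_mul _)
  -- independence of V and Y
  have hVY : IndepFun V Y P := by
    have hcomp := hUV.comp (φ := fun x : ℝ => r * x) (ψ := fun x : ℝ => (r * Real.sqrt μ) * x)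
      (measurable_id.const_mul r) (measurable_id.const_mul (r * Real.sqrt μ))
    have hYeq : ((fun x : ℝ => r * x) ∘ fun ω => a * η₀ ω + b * η₁ ω) = Y := by
      funext ω
      rw [hY, hX₀]
      simp only [Function.comp_apply, hadef, hbdef]
      field_simp
    have hVeq : ((fun x : ℝ => (r * Real.sqrt μ) * x) ∘ fun ω => -b * η₀ ω + a * η₁ ω) = V := by
      funext ω
      simp only [Function.comp_apply, hadef, hbdef, hVdef]
      have hsm2 : Real.sqrt μ ^ 2 = μ := Real.sq_sqrt hμ.le
      field_simp
      linear_combination (η₁ ω) * hsm2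
    rw [hYeq, hVeq] at hcomp
    exact hcomp.symm
  have hη₂Y : IndepFun η₂ Y P := by
    have hpair : IndepFun (fun ω => (η₀ ω, η₁ ω)) η₂ P := by
      have h := hind.indepFun_prodMk (fun i => by fin_cases i <;> simpa) 0 1 2
        (by decide) (by decide)
      simpa using h
    have hcomp := hpair.comp (φ := fun z : ℝ × ℝ => Real.sqrt μ * z.1 + σB * z.2)
      (ψ := id) ((measurable_fst.const_mul _).add (measurable_snd.const_mul _)) measurable_id
    have hYeq : ((fun z : ℝ × ℝ => Real.sqrt μ * z.1 + σB * z.2) ∘ fun ω => (η₀ ω, η₁ ω)) = Y := by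
      funext ω; rw [hY, hX₀]; rfl
    rw [hYeq] at hcomp
    exact hcomp.symm
  -- integrability and means
  have hint : ∀ (f : Ω → ℝ), Measurable f → P.map f = gaussianReal 0 1 →
      Integrable f P ∧ ∫ ω, f ω ∂P = 0 := by
    intro f hf hgf
    constructor
    · have h := (integrable_map_measure (f := f) (g := fun x : ℝ => x)
        (by rw [hgf]; exact measurable_id.aestronglyMeasurable) hf.aemeasurable).mp
        (by rw [hgf]; exact gauss_int_id)
      exact h
    · have h : ∫ x, x ∂(P.map f) = ∫ ω, f ω ∂P :=
        integral_map hf.aemeasurable measurable_id.aestronglyMeasurable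
      rw [hgf, gauss_mean_zero] at h
      exact h.symm
  obtain ⟨hi0, hm0⟩ := hint η₀ hη₀ hg₀
  obtain ⟨hi1, hm1⟩ := hint η₁ hη₁ hg₁
  obtain ⟨hi2, hm2⟩ := hint η₂ hη₂ hg₂
  have hVint : Integrable V P := ((hi0.const_mul _).add (hi1.const_mul _))
  have hVmean : ∫ ω, V ω ∂P = 0 := by
    rw [hVdef]
    rw [integral_add (hi0.const_mul _) (hi1.const_mul _), integral_const_mul, integral_const_mul,
      hm0, hm1]
    ring
  -- decomposition of S
  set κ : ℝ := Real.exp (t / 2) * p * q / Dt * σB / μ with hκdef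
  set κ₂ : ℝ := -(Real.exp t * p * (1 + q) / Dt) * Real.sqrt (lam * (1 - Real.exp (-t)))
    with hκ₂def
  have hS' : S = fun ω => κ * V ω + κ₂ * η₂ ω := by
    funext ω
    rw [hS, hXt, hX₀, hY, hX₀]
    simp only [hVdef, hκdef, hκ₂def]
    rw [hq, hEneg, hE]
    field_simp
    ring
  -- conditional expectation computation
  have hm := hYm.comap_le
  have hVsm : StronglyMeasurable[MeasurableSpace.comap V inferInstance] V :=
    (Measurable.of_comap_le le_rfl).stronglyMeasurable
  have hη₂sm : StronglyMeasurable[MeasurableSpace.comap η₂ inferInstance] η₂ :=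
    (Measurable.of_comap_le le_rfl).stronglyMeasurable
  have hcondV : P[V | MeasurableSpace.comap Y inferInstance] =ᵐ[P] fun _ => ∫ ω, V ω ∂P :=
    condExp_indep_eq hVm.comap_le hm hVsm ((IndepFun_iff_Indep V Y P).mp hVY)
  have hcondη₂ : P[η₂ | MeasurableSpace.comap Y inferInstance] =ᵐ[P] fun _ => ∫ ω, η₂ ω ∂P :=
    condExp_indep_eq hη₂.comap_le hm hη₂sm ((IndepFun_iff_Indep η₂ Y P).mp hη₂Y)
  have hA : P[κ • V | MeasurableSpace.comap Y inferInstance] =ᵐ[P] fun _ => κ * (∫ ω, V ω ∂P) := by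
    refine (condExp_smul κ V _).trans ?_
    filter_upwards [hcondV] with ω hω
    simp [hω]
  have hB : P[κ₂ • η₂ | MeasurableSpace.comap Y inferInstance] =ᵐ[P] fun _ => κ₂ * (∫ ω, η₂ ω ∂P) := by
    refine (condExp_smul κ₂ η₂ _).trans ?_
    filter_upwards [hcondη₂] with ω hω
    simp [hω]
  have hfg : (fun ω => κ * V ω + κ₂ * η₂ ω) = (κ • V) + (κ₂ • η₂) := rfl
  rw [hS', hfg]
  refine (condExp_add (hVint.smul κ) (hi2.smul κ₂) _).trans ?_
  filter_upwards [hA, hB] with ω h h'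
  simp only [Pi.add_apply, h, h', hVmean, hm2]
  ring
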